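/- Let v₀, v₁ ∈ (ℤ^d)* and w₀, w₁ ∈ ℤ^d satisfy ⟨vᵢ, wⱼ⟩ = 1 for all i,j ∈ {0,1}. Define the monodromy transformation T: ℤ^d_{v₀} → ℤ^d as the composition of the four transition isomorphisms around the loop (v₀ w₀ v₁ w₁): first project ℤ^d_{v₀} → ℤ^d/w₀, lift via the inverse of ℤ^d_{v₁} → ℤ^d/w₀, then project ℤ^d_{v₁} → ℤ^d/w₁, and lift via the inverse of ℤ^d_{v₀} → ℤ^d/w₁. Then T(n) = n + ⟨v₁, n⟩(w₁ - w₀) for all n ∈ ℤ^d_{v₀}. -/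
import Mathlib


/-- The monodromy around the primary loop `(v₀ w₀ v₁ w₁)`.  If `t` is obtained from
`n ∈ ℤ^d_{v₀}` by projecting to `ℤ^d/w₀`, lifting to `ℤ^d_{v₁}` (as `n'`), projecting to
`ℤ^d/w₁` and lifting back to `ℤ^d_{v₀}`, then `t = n + ⟨v₁,n⟩(w₁ - w₀)`. -/
theorem stmt4 {d : ℕ} (v₀ v₁ : Module.Dual ℤ (Fin d → ℤ)) (w₀ w₁ : Fin d → ℤ)
    (h00 : v₀ w₀ = 1) (h01 : v₀ w₁ = 1) (h10 : v₁ w₀ = 1) (h11 : v₁ w₁ = 1)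
    (n n' t : Fin d → ℤ)
    (hn : v₀ n = 0) (hn' : v₁ n' = 0) (ht : v₀ t = 0)
    (h1 : n' - n ∈ Submodule.span ℤ ({w₀} : Set (Fin d → ℤ)))
    (h2 : t - n' ∈ Submodule.span ℤ ({w₁} : Set (Fin d → ℤ))) :
    t = n + v₁ n • (w₁ - w₀) := by
  obtain ⟨a, ha⟩ := Submodule.mem_span_singleton.mp h1
  obtain ⟨b, hb⟩ := Submodule.mem_span_singleton.mp h2
  have ha' : a = -v₁ n := by
    have := congrArg v₁ ha
    rw [map_smul, map_sub, hn', h10, smul_eq_mul, mul_one] at this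
    omega
  have hvn' : v₀ n' = -v₁ n := by
    have := congrArg v₀ ha
    rw [map_smul, map_sub, hn, h00, smul_eq_mul, mul_one, ha'] at this
    omega
  have hb' : b = v₁ n := by
    have := congrArg v₀ hb
    rw [map_smul, map_sub, ht, h01, smul_eq_mul, mul_one, hvn'] at this
    omega
  have hn'' : n' = n + a • w₀ := by rw [ha]; abel
  have htt : t = n' + b • w₁ := by rw [hb]; abel
  rw [htt, hn'', ha', hb']
  module
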